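/- Let X be a set, f : X → ℝ with f(x) ≥ 0 and g : X → ℝ with 0 ≤ g(x) < 1 for all x in a constraint set C ⊆ X. Then inf over x ∈ C of f(x)/(1 - g(x)) equals inf over γ ∈ [0,1) of (1/(1-γ)) · inf { f(x) : x ∈ C, g(x) ≤ γ }. -/
import Mathlib

private lemma ereal_inv_mul_cancel {c : ℝ} (hc : 0 < c) (x : EReal) :
    ((c⁻¹ : ℝ) : EReal) * (((c : ℝ) : EReal) * x) = x := by
  induction x with
  | bot =>
      rw [EReal.coe_mul_bot_of_pos hc, EReal.coe_mul_bot_of_pos (by positivity)]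
  | coe r =>
      rw [← EReal.coe_mul, ← EReal.coe_mul, inv_mul_cancel_left₀ hc.ne']
  | top =>
      rw [EReal.coe_mul_top_of_pos hc, EReal.coe_mul_top_of_pos (by positivity)]

/-- Multiplication by a positive real constant commutes with infima in `EReal`. -/
private lemma ereal_mul_iInf {c : ℝ} (hc : 0 < c) {ι : Sort*} (a : ι → EReal) :
    ((c : ℝ) : EReal) * ⨅ i, a i = ⨅ i, ((c : ℝ) : EReal) * a i := by
  have hc' : (0 : EReal) ≤ ((c : ℝ) : EReal) := by exact_mod_cast hc.le
  have hci' : (0 : EReal) ≤ ((c⁻¹ : ℝ) : EReal) := by exact_mod_cast (inv_nonneg.mpr hc.le)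
  apply le_antisymm
  · exact le_iInf fun i => mul_le_mul_of_nonneg_left (iInf_le a i) hc'
  · have h1 : ((c⁻¹ : ℝ) : EReal) * ⨅ i, ((c : ℝ) : EReal) * a i ≤ ⨅ i, a i := by
      refine le_iInf fun i => ?_
      refine le_trans (mul_le_mul_of_nonneg_left (iInf_le _ i) hci') ?_
      rw [ereal_inv_mul_cancel hc]
    have h2 := mul_le_mul_of_nonneg_left h1 hc'
    have h3 : ((c : ℝ) : EReal) * (((c⁻¹ : ℝ) : EReal) * ⨅ i, ((c : ℝ) : EReal) * a i)
        = ⨅ i, ((c : ℝ) : EReal) * a i := by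
      have := ereal_inv_mul_cancel (c := c⁻¹) (by positivity) (⨅ i, ((c : ℝ) : EReal) * a i)
      rwa [inv_inv] at this
    rwa [h3] at h2

/-- Partial-minimization / quasi-convex reformulation identity:
`inf_{x ∈ C} f(x)/(1 - g(x)) = inf_{γ ∈ [0,1)} (1/(1-γ)) · inf {f(x) : x ∈ C, g(x) ≤ γ}`,
with infima in the extended reals. -/
theorem inf_ratio_eq_inf_partial_min {X : Type*} (C : Set X) (hC : C.Nonempty)
    (f g : X → ℝ) (hf : ∀ x ∈ C, 0 ≤ f x) (hg : ∀ x ∈ C, 0 ≤ g x ∧ g x < 1) :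
    (⨅ x ∈ C, ((f x / (1 - g x) : ℝ) : EReal)) =
      ⨅ γ ∈ Set.Ico (0 : ℝ) 1,
        ((1 / (1 - γ) : ℝ) : EReal) * ⨅ x ∈ {x | x ∈ C ∧ g x ≤ γ}, ((f x : ℝ) : EReal) := by
  apply le_antisymm
  · -- LHS ≤ RHS
    refine le_iInf₂ fun γ hγ => ?_
    obtain ⟨hγ0, hγ1⟩ := hγ
    have h1γ : 0 < 1 - γ := by linarith
    have hcpos : 0 < 1 / (1 - γ) := by positivity
    rw [ereal_mul_iInf hcpos]
    refine le_iInf fun x => ?_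
    rw [ereal_mul_iInf hcpos]
    refine le_iInf fun hx => ?_
    obtain ⟨hxC, hgxγ⟩ := hx
    refine le_trans (iInf₂_le x hxC) ?_
    rw [← EReal.coe_mul, EReal.coe_le_coe_iff]
    have h1gx : 0 < 1 - g x := by linarith [(hg x hxC).2]
    rw [one_div, inv_mul_eq_div]
    gcongr
    all_goals first | exact hf x hxC | linarith
  · -- RHS ≤ LHS
    refine le_iInf₂ fun x hx => ?_
    obtain ⟨hg0, hg1⟩ := hg x hx
    refine le_trans (iInf₂_le (g x) ⟨hg0, hg1⟩) ?_
    have h1gx : 0 < 1 - g x := by linarith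
    have step : (⨅ y ∈ {y | y ∈ C ∧ g y ≤ g x}, ((f y : ℝ) : EReal)) ≤ ((f x : ℝ) : EReal) :=
      iInf₂_le x ⟨hx, le_refl _⟩
    calc ((1 / (1 - g x) : ℝ) : EReal) * ⨅ y ∈ {y | y ∈ C ∧ g y ≤ g x}, ((f y : ℝ) : EReal)
        ≤ ((1 / (1 - g x) : ℝ) : EReal) * ((f x : ℝ) : EReal) :=
          mul_le_mul_of_nonneg_left step (by exact_mod_cast (by positivity : (0:ℝ) ≤ 1 / (1 - g x)))
      _ = ((f x / (1 - g x) : ℝ) : EReal) := by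
          rw [← EReal.coe_mul, one_div, inv_mul_eq_div]
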